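/- Condition of closure of the rank-zero quotient algebra partition (the key relations of Theorem 1): for every p ≥ 1 and all α, β ∈ Z₂^p, with the convention that Ŵ_0 is replaced by W_0 when the string is 0 (W_0 is the span of the diagonal spinors S^ζ_0, the intrinsic Cartan subalgebra), the commutators satisfy: [W_α, W_β] ⊆ Ŵ_{α+β}, [W_α, Ŵ_β] ⊆ W_{α+β}, and [Ŵ_α, Ŵ_β] ⊆ Ŵ_{α+β}; i.e., for X in the first subspace and Y in the second, X*Y − Y*X lies in the indicated subspace (with Ŵ_{α+β} read as W_0 if α + β = 0). -/
import Mathlib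


open Matrix

/-- `Z₂^p`, the binary strings of length `p`. -/
abbrev Z2 (p : ℕ) : Type := Fin p → ZMod 2

/-- Inner product of two binary strings, valued in `ZMod 2`. -/
def dotp {p : ℕ} (ζ γ : Z2 p) : ZMod 2 := ∑ i, ζ i * γ i

/-- `(-1)^x` for `x : ZMod 2`, as a complex number. -/
noncomputable def sgn (x : ZMod 2) : ℂ := if x = 0 then 1 else -1

/-- The spinor `S^ζ_α`: the `2^p × 2^p` complex matrix with `(γ, β)` entry
`(-1)^{ζ·γ}` if `γ = β + α` and `0` otherwise. -/
noncomputable def Spinor {p : ℕ} (ζ α : Z2 p) : Matrix (Z2 p) (Z2 p) ℂ :=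
  Matrix.of fun γ β => if γ = β + α then sgn (dotp ζ γ) else 0

/-- `W_α`: the span of the spinors `S^ζ_α` with `ζ·α = 0`. -/
noncomputable def Wsp {p : ℕ} (α : Z2 p) : Submodule ℂ (Matrix (Z2 p) (Z2 p) ℂ) :=
  Submodule.span ℂ {M | ∃ ζ, dotp ζ α = 0 ∧ M = Spinor ζ α}

/-- `Ŵ_α`: the span of the spinors `S^ζ_α` with `ζ·α = 1`. -/
noncomputable def WspHat {p : ℕ} (α : Z2 p) : Submodule ℂ (Matrix (Z2 p) (Z2 p) ℂ) :=
  Submodule.span ℂ {M | ∃ ζ, dotp ζ α = 1 ∧ M = Spinor ζ α}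

lemma zmod2cases : ∀ x : ZMod 2, x = 0 ∨ x = 1 := by decide

lemma sgn_add (x y : ZMod 2) : sgn (x + y) = sgn x * sgn y := by
  rcases zmod2cases x with rfl | rfl <;> rcases zmod2cases y with rfl | rfl <;>
    norm_num [sgn] <;> decide

lemma dotp_add_right {p : ℕ} (ζ γ δ : Z2 p) : dotp ζ (γ + δ) = dotp ζ γ + dotp ζ δ := by
  simp [dotp, mul_add, Finset.sum_add_distrib]

lemma dotp_add_left {p : ℕ} (ζ η γ : Z2 p) : dotp (ζ + η) γ = dotp ζ γ + dotp η γ := by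
  simp [dotp, add_mul, Finset.sum_add_distrib]

lemma z2_add_self {p : ℕ} (x : Z2 p) : x + x = 0 := funext fun i => by
  have : ∀ y : ZMod 2, y + y = 0 := by decide
  exact this _

lemma spinor_mul {p : ℕ} (ζ η α β : Z2 p) :
    Spinor ζ α * Spinor η β = sgn (dotp η α) • Spinor (ζ + η) (α + β) := by
  ext γ δ
  simp only [mul_apply, Spinor, of_apply, Matrix.smul_apply, smul_eq_mul]
  rw [Finset.sum_eq_single (δ + β)]
  · have hiff : γ = δ + β + α ↔ γ = δ + (α + β) := by
      constructor <;> intro hh <;> rw [hh] <;> ring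
    by_cases h : γ = δ + β + α
    · have h3 : δ + β = γ + α := by rw [h, add_assoc, z2_add_self, add_zero]
      rw [if_pos h, if_pos (hiff.mp h), h3, dotp_add_right, dotp_add_left, sgn_add, sgn_add]
      simp only [if_true]
      ring
    · rw [if_neg h, if_neg (fun hh => h (hiff.mpr hh)), zero_mul, mul_zero]
  · intro b _ hb
    rw [if_neg (fun hh : b = δ + β => hb hh), mul_zero]
  · intro hmem; exact absurd (Finset.mem_univ _) hmem

lemma spinor_comm {p : ℕ} (ζ η α β : Z2 p) :
    Spinor ζ α * Spinor η β - Spinor η β * Spinor ζ α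
      = (sgn (dotp η α) - sgn (dotp ζ β)) • Spinor (ζ + η) (α + β) := by
  rw [spinor_mul, spinor_mul, add_comm η ζ, add_comm β α, sub_smul]

lemma comm_span {A : Type*} [Ring A] [Algebra ℂ A] (P Q : Set A) (T : Submodule ℂ A)
    (h : ∀ x ∈ P, ∀ y ∈ Q, x * y - y * x ∈ T) :
    ∀ X ∈ Submodule.span ℂ P, ∀ Y ∈ Submodule.span ℂ Q, X * Y - Y * X ∈ T := by
  have hx : ∀ x, (∀ y ∈ Q, x * y - y * x ∈ T) →
      ∀ Y ∈ Submodule.span ℂ Q, x * Y - Y * x ∈ T := by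
    intro x hxq Y hY
    induction hY using Submodule.span_induction with
    | mem y hy => exact hxq y hy
    | zero => simp
    | add y z _ _ hy hz =>
      have := T.add_mem hy hz
      convert this using 1; noncomm_ring
    | smul c y _ hy =>
      have := T.smul_mem c hy
      convert this using 1
      rw [mul_smul_comm, smul_mul_assoc, ← smul_sub]
  intro X hX
  induction hX using Submodule.span_induction with
  | mem x hxP => exact hx x (h x hxP)
  | zero => intro Y hY; simp
  | add y z _ _ hy hz =>
    intro Y hY
    have := T.add_mem (hy Y hY) (hz Y hY)
    convert this using 1; noncomm_ring
  | smul c y _ hy =>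
    intro Y hY
    have := T.smul_mem c (hy Y hY)
    convert this using 1
    rw [smul_mul_assoc, mul_smul_comm, ← smul_sub]

lemma zmod2_ne {a b : ZMod 2} (h : a ≠ b) : a + b = 1 := by
  rcases zmod2cases a with rfl | rfl <;> rcases zmod2cases b with rfl | rfl <;> simp_all

lemma comm_mem {p : ℕ} (ζ η α β : Z2 p) (v : ZMod 2)
    (hv : dotp ζ α + dotp η β + 1 = v) :
    Spinor ζ α * Spinor η β - Spinor η β * Spinor ζ α ∈
      Submodule.span ℂ {M | ∃ τ, dotp τ (α + β) = v ∧ M = Spinor τ (α + β)} := by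
  rw [spinor_comm]
  by_cases hc : dotp η α = dotp ζ β
  · rw [hc, sub_self, zero_smul]; exact Submodule.zero_mem _
  · refine Submodule.smul_mem _ _ (Submodule.subset_span ⟨ζ + η, ?_, rfl⟩)
    have h1 : dotp η α + dotp ζ β = 1 := zmod2_ne hc
    rw [dotp_add_left, dotp_add_right, dotp_add_right, ← hv, ← h1]
    ring

/-- The condition of closure of the rank-zero quotient algebra partition:
`[W_α, W_β] ⊆ Ŵ_{α+β}`, `[W_α, Ŵ_β] ⊆ W_{α+β}`, `[Ŵ_α, Ŵ_β] ⊆ Ŵ_{α+β}`,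
where the target `Ŵ_{α+β}` is read as `W_0` (the intrinsic Cartan subalgebra) if `α+β = 0`. -/
theorem closure_condition {p : ℕ} (hp : 1 ≤ p) (α β : Z2 p) :
    (∀ X ∈ Wsp α, ∀ Y ∈ Wsp β,
      X * Y - Y * X ∈ if α + β = 0 then Wsp (0 : Z2 p) else WspHat (α + β)) ∧
    (∀ X ∈ Wsp α, ∀ Y ∈ WspHat β, X * Y - Y * X ∈ Wsp (α + β)) ∧
    (∀ X ∈ WspHat α, ∀ Y ∈ WspHat β,
      X * Y - Y * X ∈ if α + β = 0 then Wsp (0 : Z2 p) else WspHat (α + β)) := by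
  have hβα : α + β = 0 → β = α := by
    intro h0; funext i
    have h2 : ∀ a b : ZMod 2, a + b = 0 → b = a := by decide
    exact h2 _ _ (congrFun h0 i)
  refine ⟨?_, ?_, ?_⟩
  · by_cases h0 : α + β = 0
    · rw [if_pos h0]
      have hβ := hβα h0
      subst hβ
      intro X hX Y hY
      refine comm_span _ _ _ ?_ X hX Y hY
      rintro x ⟨ζ, hζ, rfl⟩ y ⟨η, hη, rfl⟩
      rw [spinor_comm, hζ, hη, sub_self, zero_smul]
      exact Submodule.zero_mem _
    · rw [if_neg h0]
      intro X hX Y hY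
      refine comm_span _ _ _ ?_ X hX Y hY
      rintro x ⟨ζ, hζ, rfl⟩ y ⟨η, hη, rfl⟩
      exact comm_mem ζ η α β 1 (by rw [hζ, hη]; decide)
  · intro X hX Y hY
    refine comm_span _ _ _ ?_ X hX Y hY
    rintro x ⟨ζ, hζ, rfl⟩ y ⟨η, hη, rfl⟩
    exact comm_mem ζ η α β 0 (by rw [hζ, hη]; decide)
  · by_cases h0 : α + β = 0
    · rw [if_pos h0]
      have hβ := hβα h0
      subst hβ
      intro X hX Y hY
      refine comm_span _ _ _ ?_ X hX Y hY
      rintro x ⟨ζ, hζ, rfl⟩ y ⟨η, hη, rfl⟩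
      rw [spinor_comm, hζ, hη, sub_self, zero_smul]
      exact Submodule.zero_mem _
    · rw [if_neg h0]
      intro X hX Y hY
      refine comm_span _ _ _ ?_ X hX Y hY
      rintro x ⟨ζ, hζ, rfl⟩ y ⟨η, hη, rfl⟩
      exact comm_mem ζ η α β 1 (by rw [hζ, hη]; decide)
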